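/- The Jaccard distance d(A,B) = 1 − J(A,B) on finite subsets of a type satisfies the triangle inequality: for all finite sets A, B, C (each pairwise union nonempty), d(A,C) ≤ d(A,B) + d(B,C). -/
import Mathlib


/-- The Jaccard index of two finite sets, as a rational number. -/
def jaccard {α : Type*} [DecidableEq α] (A B : Finset α) : ℚ :=
  ((A ∩ B).card : ℚ) / ((A ∪ B).card : ℚ)

/-- The Jaccard distance of two finite sets. -/
def jaccardDist {α : Type*} [DecidableEq α] (A B : Finset α) : ℚ :=
  if A = ∅ ∧ B = ∅ then 0 else 1 - jaccard A B

private theorem jaccard_key (a b c p q r s : ℚ) (ha : 0 ≤ a) (hb : 0 ≤ b) (hc : 0 ≤ c)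
    (hp : 0 ≤ p) (hq : 0 ≤ q) (hr : 0 ≤ r) (hs : 0 ≤ s) :
    (a+c+p+r) * (a+b+p+q+r+s) * (b+c+p+q+r+s)
      ≤ (a+b+q+r) * (a+c+p+q+r+s) * (b+c+p+q+r+s)
        + (b+c+p+q) * (a+c+p+q+r+s) * (a+b+p+q+r+s) := by
  rw [← sub_nonneg]
  have h : (a+b+q+r) * (a+c+p+q+r+s) * (b+c+p+q+r+s)
        + (b+c+p+q) * (a+c+p+q+r+s) * (a+b+p+q+r+s)
      - (a+c+p+r) * (a+b+p+q+r+s) * (b+c+p+q+r+s)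
      = 1*a*a*b + 1*a*a*c + 1*a*a*p + 1*a*a*q + 2*a*b*c + 1*a*c*c + 2*a*c*p + 4*a*c*q + 2*a*c*r + 2*a*c*s + 2*a*b*p + 1*a*p*p + 4*a*p*q + 1*a*p*r + 1*a*p*s + 4*a*b*q + 3*a*q*q + 3*a*q*r + 3*a*q*s + 2*a*b*r + 2*a*b*s + 1*a*b*b + 1*b*b*c + 1*b*c*c + 2*b*c*p + 4*b*c*q + 2*b*c*r + 2*b*c*s + 1*b*b*p + 1*b*p*p + 5*b*p*q + 2*b*p*r + 3*b*p*s + 2*b*b*q + 4*b*q*q + 5*b*q*r + 6*b*q*s + 1*b*b*r + 1*b*r*r + 3*b*r*s + 2*b*b*s + 2*b*s*s + 1*c*c*q + 3*c*p*q + 3*c*q*q + 4*c*q*r + 3*c*q*s + 2*p*p*q + 4*p*q*q + 4*p*q*r + 4*p*q*s + 2*q*q*q + 4*q*q*r + 4*q*q*s + 2*q*r*r + 4*q*r*s + 2*q*s*s + 1*c*c*r + 1*c*p*r + 1*c*r*r + 1*c*r*s := by ring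
  rw [h]
  positivity

set_option maxHeartbeats 1000000 in
theorem stmt_5 {α : Type*} [DecidableEq α] (A B C : Finset α)
    (hAB : (A ∪ B).Nonempty) (hBC : (B ∪ C).Nonempty) (hAC : (A ∪ C).Nonempty) :
    jaccardDist A C ≤ jaccardDist A B + jaccardDist B C := by
  have hABne : ¬(A = ∅ ∧ B = ∅) := by
    rintro ⟨h1, h2⟩; rw [h1, h2] at hAB; simp at hAB
  have hBCne : ¬(B = ∅ ∧ C = ∅) := by
    rintro ⟨h1, h2⟩; rw [h1, h2] at hBC; simp at hBC
  have hACne : ¬(A = ∅ ∧ C = ∅) := by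
    rintro ⟨h1, h2⟩; rw [h1, h2] at hAC; simp at hAC
  rw [jaccardDist, jaccardDist, jaccardDist, if_neg hABne, if_neg hBCne, if_neg hACne,
    jaccard, jaccard, jaccard]
  -- Venn regions
  set a := (A \ (B ∪ C)).card with ha
  set b := (B \ (A ∪ C)).card with hb
  set c := (C \ (A ∪ B)).card with hc
  set p := ((A ∩ B) \ C).card with hp
  set q := ((A ∩ C) \ B).card with hq
  set r := ((B ∩ C) \ A).card with hr
  set s := (A ∩ B ∩ C).card with hs
  have hACB : (A ∩ C) ∩ B = A ∩ B ∩ C := by ext x; simp; tauto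
  have hBCA : (B ∩ C) ∩ A = A ∩ B ∩ C := by ext x; simp; tauto
  have e1 : p + s = (A ∩ B).card := by
    have := Finset.card_sdiff_add_card_inter (A ∩ B) C; omega
  have e2 : q + s = (A ∩ C).card := by
    have := Finset.card_sdiff_add_card_inter (A ∩ C) B; rw [hACB] at this; omega
  have e3 : r + s = (B ∩ C).card := by
    have := Finset.card_sdiff_add_card_inter (B ∩ C) A; rw [hBCA] at this; omega
  have eA : A.card = a + p + q + s := by
    have h1 := Finset.card_sdiff_add_card_inter A (B ∪ C)
    have h2 : A ∩ (B ∪ C) = (A ∩ B) ∪ (A ∩ C) := Finset.inter_union_distrib_left A B C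
    have h3 := Finset.card_union_add_card_inter (A ∩ B) (A ∩ C)
    have h4 : (A ∩ B) ∩ (A ∩ C) = A ∩ B ∩ C := by ext x; simp; tauto
    rw [h2] at h1; rw [h4] at h3; omega
  have eB : B.card = b + p + r + s := by
    have h1 := Finset.card_sdiff_add_card_inter B (A ∪ C)
    have h2 : B ∩ (A ∪ C) = (A ∩ B) ∪ (B ∩ C) := by ext x; simp [and_comm]; tauto
    have h3 := Finset.card_union_add_card_inter (A ∩ B) (B ∩ C)
    have h4 : (A ∩ B) ∩ (B ∩ C) = A ∩ B ∩ C := by ext x; simp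
    rw [h2] at h1; rw [h4] at h3; omega
  have eC : C.card = c + q + r + s := by
    have h1 := Finset.card_sdiff_add_card_inter C (A ∪ B)
    have h2 : C ∩ (A ∪ B) = (A ∩ C) ∪ (B ∩ C) := by ext x; simp [and_comm]; tauto
    have h3 := Finset.card_union_add_card_inter (A ∩ C) (B ∩ C)
    have h4 : (A ∩ C) ∩ (B ∩ C) = A ∩ B ∩ C := by ext x; simp
    rw [h2] at h1; rw [h4] at h3; omega
  have uAB : (A ∪ B).card = a + b + p + q + r + s := by
    have := Finset.card_union_add_card_inter A B; omega
  have uBC : (B ∪ C).card = b + c + p + q + r + s := by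
    have := Finset.card_union_add_card_inter B C; omega
  have uAC : (A ∪ C).card = a + c + p + q + r + s := by
    have := Finset.card_union_add_card_inter A C; omega
  have hABpos : 0 < (A ∪ B).card := Finset.card_pos.mpr hAB
  have hBCpos : 0 < (B ∪ C).card := Finset.card_pos.mpr hBC
  have hACpos : 0 < (A ∪ C).card := Finset.card_pos.mpr hAC
  rw [← e1, ← e2, ← e3, uAB, uBC, uAC]
  rw [uAB] at hABpos; rw [uBC] at hBCpos; rw [uAC] at hACpos
  have hu : (0:ℚ) < ((a:ℚ)+c+p+q+r+s) := by exact_mod_cast hACpos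
  have hv : (0:ℚ) < ((a:ℚ)+b+p+q+r+s) := by exact_mod_cast hABpos
  have hw : (0:ℚ) < ((b:ℚ)+c+p+q+r+s) := by exact_mod_cast hBCpos
  push_cast
  have g1 : 1 - ((q:ℚ)+s)/((a:ℚ)+c+p+q+r+s) = ((a:ℚ)+c+p+r)/((a:ℚ)+c+p+q+r+s) := by
    rw [one_sub_div hu.ne']; congr 1; ring
  have g2 : 1 - ((p:ℚ)+s)/((a:ℚ)+b+p+q+r+s) = ((a:ℚ)+b+q+r)/((a:ℚ)+b+p+q+r+s) := by
    rw [one_sub_div hv.ne']; congr 1; ring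
  have g3 : 1 - ((r:ℚ)+s)/((b:ℚ)+c+p+q+r+s) = ((b:ℚ)+c+p+q)/((b:ℚ)+c+p+q+r+s) := by
    rw [one_sub_div hw.ne']; congr 1; ring
  rw [g1, g2, g3, div_add_div _ _ (ne_of_gt hv) (ne_of_gt hw),
    div_le_div_iff₀ hu (mul_pos hv hw)]
  have hk := jaccard_key (a:ℚ) b c p q r s (Nat.cast_nonneg _) (Nat.cast_nonneg _) (Nat.cast_nonneg _)
    (Nat.cast_nonneg _) (Nat.cast_nonneg _) (Nat.cast_nonneg _) (Nat.cast_nonneg _)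
  linarith [hk]
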